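/- arXiv:1612.01700 — 3 statements merged into one kernel-verified Lean document; each statement's English description precedes it below -/
import Mathlib

section
/- Let N ≥ 2, 1 ≤ k < N, let Ω ⊂ ℝ^N be a bounded open set, and let H : Ω × ℝ^N → ℝ be continuous and satisfy (SC2) and (SC3); set b = sup{|H(x,ξ)| : x ∈ Ω, |ξ| ≤ 1}. If Ω contains an open ball of radius R₁ > 0, then μ̄ₖ⁻(Ω) ≤ 2(k + bR₁)(2 + k + bR₁)/R₁². -/
open Metric Filter Topology Set

/-- `𝒫⁻ₖ(D²φ(x))`: the sum of the `k` smallest eigenvalues of the Hessian of `φ` at `x`,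
expressed through the min-max representation over orthonormal `k`-frames. -/
noncomputable def Pminus {N : ℕ} (k : ℕ) (φ : EuclideanSpace ℝ (Fin N) → ℝ)
    (x : EuclideanSpace ℝ (Fin N)) : ℝ :=
  sInf {s : ℝ | ∃ ξ : Fin k → EuclideanSpace ℝ (Fin N), Orthonormal ℝ ξ ∧
    s = ∑ i, iteratedFDeriv ℝ 2 φ x ![ξ i, ξ i]}

/-- `𝒫⁺ₖ(D²φ(x))`: the sum of the `k` largest eigenvalues of the Hessian of `φ` at `x`. -/
noncomputable def Pplus {N : ℕ} (k : ℕ) (φ : EuclideanSpace ℝ (Fin N) → ℝ)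
    (x : EuclideanSpace ℝ (Fin N)) : ℝ :=
  sSup {s : ℝ | ∃ ξ : Fin k → EuclideanSpace ℝ (Fin N), Orthonormal ℝ ξ ∧
    s = ∑ i, iteratedFDeriv ℝ 2 φ x ![ξ i, ξ i]}

/-- Viscosity subsolution of `P(D²u) + H(x,∇u) + μ u = f(x)` in `Ω`:
for every `x₀ ∈ Ω` and every `C²` test function `φ` such that `u - φ` has a local
maximum (relative to `Ω`) at `x₀`, one has `P(D²φ(x₀)) + H(x₀,∇φ(x₀)) + μ u(x₀) ≥ f(x₀)`. -/
def IsViscSubsol {N : ℕ}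
    (P : (EuclideanSpace ℝ (Fin N) → ℝ) → EuclideanSpace ℝ (Fin N) → ℝ)
    (Ω : Set (EuclideanSpace ℝ (Fin N)))
    (H : EuclideanSpace ℝ (Fin N) → EuclideanSpace ℝ (Fin N) → ℝ)
    (μ : ℝ) (f : EuclideanSpace ℝ (Fin N) → ℝ)
    (u : EuclideanSpace ℝ (Fin N) → ℝ) : Prop :=
  ∀ x₀ ∈ Ω, ∀ φ : EuclideanSpace ℝ (Fin N) → ℝ, ContDiffAt ℝ 2 φ x₀ →
    IsLocalMaxOn (fun x => u x - φ x) Ω x₀ →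
    f x₀ ≤ P φ x₀ + H x₀ (gradient φ x₀) + μ * u x₀

/-- Viscosity supersolution of `P(D²u) + H(x,∇u) + μ u = f(x)` in `Ω`. -/
def IsViscSupersol {N : ℕ}
    (P : (EuclideanSpace ℝ (Fin N) → ℝ) → EuclideanSpace ℝ (Fin N) → ℝ)
    (Ω : Set (EuclideanSpace ℝ (Fin N)))
    (H : EuclideanSpace ℝ (Fin N) → EuclideanSpace ℝ (Fin N) → ℝ)
    (μ : ℝ) (f : EuclideanSpace ℝ (Fin N) → ℝ)
    (u : EuclideanSpace ℝ (Fin N) → ℝ) : Prop :=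
  ∀ x₀ ∈ Ω, ∀ φ : EuclideanSpace ℝ (Fin N) → ℝ, ContDiffAt ℝ 2 φ x₀ →
    IsLocalMinOn (fun x => u x - φ x) Ω x₀ →
    P φ x₀ + H x₀ (gradient φ x₀) + μ * u x₀ ≤ f x₀

/-- Structure condition (SC1): `|H(x,ξ)| ≤ b‖ξ‖`. -/
def SC1 {N : ℕ} (Ω : Set (EuclideanSpace ℝ (Fin N)))
    (H : EuclideanSpace ℝ (Fin N) → EuclideanSpace ℝ (Fin N) → ℝ) (b : ℝ) : Prop :=
  ∀ x ∈ Ω, ∀ ξ : EuclideanSpace ℝ (Fin N), |H x ξ| ≤ b * ‖ξ‖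

/-- Structure condition (SC2): positive 1-homogeneity in the gradient variable. -/
def SC2 {N : ℕ} (Ω : Set (EuclideanSpace ℝ (Fin N)))
    (H : EuclideanSpace ℝ (Fin N) → EuclideanSpace ℝ (Fin N) → ℝ) : Prop :=
  ∀ x ∈ Ω, ∀ t : ℝ, 0 ≤ t → ∀ ξ : EuclideanSpace ℝ (Fin N), H x (t • ξ) = t * H x ξ

/-- Structure condition (SC3): uniform continuity in `x` through a modulus of continuity. -/
def SC3 {N : ℕ} (Ω : Set (EuclideanSpace ℝ (Fin N)))
    (H : EuclideanSpace ℝ (Fin N) → EuclideanSpace ℝ (Fin N) → ℝ) : Prop :=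
  ∃ ω : ℝ → ℝ, Monotone ω ∧ Filter.Tendsto ω (𝓝[>] (0 : ℝ)) (𝓝 (0 : ℝ)) ∧
    ∀ x ∈ Ω, ∀ y ∈ Ω, ∀ ξ : EuclideanSpace ℝ (Fin N),
      |H x ξ - H y ξ| ≤ ω (‖x - y‖ * (1 + ‖ξ‖))

/-- `Ω ∈ 𝒞_R`: a "hula hoop" domain, i.e. an intersection of a nonempty family of
open balls of the common radius `R`. -/
def HulaHoop {N : ℕ} (R : ℝ) (Ω : Set (EuclideanSpace ℝ (Fin N))) : Prop :=
  ∃ Y : Set (EuclideanSpace ℝ (Fin N)), Y.Nonempty ∧ Ω = ⋂ y ∈ Y, ball y R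

/-- `μ̄ₖ⁻(Ω)`: the supremum (in `EReal`) of those `μ` for which there is an upper
semicontinuous `w < 0` on `cl(Ω)` which is a viscosity subsolution of
`𝒫⁻ₖ(D²w) + H(x,∇w) + μ w = 0` in `Ω`. -/
noncomputable def muBarMinus {N : ℕ} (k : ℕ) (Ω : Set (EuclideanSpace ℝ (Fin N)))
    (H : EuclideanSpace ℝ (Fin N) → EuclideanSpace ℝ (Fin N) → ℝ) : EReal :=
  sSup {m : EReal | ∃ μ : ℝ, m = (μ : EReal) ∧ ∃ w : EuclideanSpace ℝ (Fin N) → ℝ,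
    UpperSemicontinuousOn w (closure Ω) ∧ (∀ x ∈ closure Ω, w x < 0) ∧
    IsViscSubsol (Pminus k) Ω H μ (fun _ => 0) w}

/-- `μₖ⁻(Ω)`: as `μ̄ₖ⁻(Ω)`, but only requiring `w < 0` (and upper semicontinuous) in `Ω`. -/
noncomputable def muMinus {N : ℕ} (k : ℕ) (Ω : Set (EuclideanSpace ℝ (Fin N)))
    (H : EuclideanSpace ℝ (Fin N) → EuclideanSpace ℝ (Fin N) → ℝ) : EReal :=
  sSup {m : EReal | ∃ μ : ℝ, m = (μ : EReal) ∧ ∃ w : EuclideanSpace ℝ (Fin N) → ℝ,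
    UpperSemicontinuousOn w Ω ∧ (∀ x ∈ Ω, w x < 0) ∧
    IsViscSubsol (Pminus k) Ω H μ (fun _ => 0) w}

/-- `μ̄ₖ⁺(Ω)`: the supremum (in `EReal`) of those `μ` for which there is a lower
semicontinuous `w > 0` on `cl(Ω)` which is a viscosity supersolution of
`𝒫⁻ₖ(D²w) + H(x,∇w) + μ w = 0` in `Ω`. -/
noncomputable def muBarPlus {N : ℕ} (k : ℕ) (Ω : Set (EuclideanSpace ℝ (Fin N)))
    (H : EuclideanSpace ℝ (Fin N) → EuclideanSpace ℝ (Fin N) → ℝ) : EReal :=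
  sSup {m : EReal | ∃ μ : ℝ, m = (μ : EReal) ∧ ∃ w : EuclideanSpace ℝ (Fin N) → ℝ,
    LowerSemicontinuousOn w (closure Ω) ∧ (∀ x ∈ closure Ω, 0 < w x) ∧
    IsViscSupersol (Pminus k) Ω H μ (fun _ => 0) w}

/-- `μₖ⁺(Ω)`: as `μ̄ₖ⁺(Ω)`, but only requiring `w > 0` (and lower semicontinuous) in `Ω`. -/
noncomputable def muPlus {N : ℕ} (k : ℕ) (Ω : Set (EuclideanSpace ℝ (Fin N)))
    (H : EuclideanSpace ℝ (Fin N) → EuclideanSpace ℝ (Fin N) → ℝ) : EReal :=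
  sSup {m : EReal | ∃ μ : ℝ, m = (μ : EReal) ∧ ∃ w : EuclideanSpace ℝ (Fin N) → ℝ,
    LowerSemicontinuousOn w Ω ∧ (∀ x ∈ Ω, 0 < w x) ∧
    IsViscSupersol (Pminus k) Ω H μ (fun _ => 0) w}

/-!
If `w < 0` is a subsolution on `closure Ω ⊇ B̄(c, R)`, put `g = R² - ‖x - c‖²`. The ratio `w / g²`
tends to `-∞` at `∂B`, so it attains its maximum `-t < 0` at an interior point `x₀`, where
`φ = -t g²` touches `w` from above. Testing the equation with `φ`, along an orthonormal `k`-frame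
containing the direction of `x₀ - c`, gives `μ g² ≤ 4 (k + bR) g - 8 (R² - g)` at `x₀`, and
maximizing the right-hand side over `g > 0` yields the bound.
-/

open RealInnerProductSpace

lemma UpperSemicontinuousWithinAt.mul_continuousWithinAt {α : Type*} [TopologicalSpace α]
    {f g : α → ℝ} {s : Set α} {x : α} (hf : UpperSemicontinuousWithinAt f s x)
    (hg : ContinuousWithinAt g s x) (hgx : 0 < g x) :
    UpperSemicontinuousWithinAt (fun z => f z * g z) s x := by
  intro y hy
  obtain ⟨a, hfa, hay⟩ := exists_between ((lt_div_iff₀ hgx).2 hy)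
  have hag : a * g x < y := (lt_div_iff₀ hgx).1 hay
  filter_upwards [hf a hfa, (hg.const_mul a).eventually_lt_const hag,
    hg.eventually_const_lt hgx] with z hfz hgz hz
  exact (mul_le_mul_of_nonneg_right hfz.le hz.le).trans_lt hgz

lemma UpperSemicontinuousOn.mul_continuousOn {α : Type*} [TopologicalSpace α]
    {f g : α → ℝ} {s : Set α} (hf : UpperSemicontinuousOn f s) (hg : ContinuousOn g s)
    (hpos : ∀ x ∈ s, 0 < g x) : UpperSemicontinuousOn (fun z => f z * g z) s :=
  fun x hx => UpperSemicontinuousWithinAt.mul_continuousWithinAt (hf x hx) (hg x hx) (hpos x hx)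

lemma mul_sq_le_of_mul_sq_le {μ β g R : ℝ} (hβ : 1 ≤ β) (hg : 0 < g)
    (h : μ * g ^ 2 ≤ 4 * β * g - 8 * (R ^ 2 - g)) : μ * R ^ 2 ≤ 2 * β * (2 + β) := by
  -- `(4β + 8) g R² - 8R⁴ = ((β + 2) g)² / 2 - ((β + 2) g - 4R²)² / 2`, and `(β + 2)² ≤ 4β(β + 2)`.
  have hquad : (4 * β * g - 8 * (R ^ 2 - g)) * R ^ 2 ≤ 2 * β * (2 + β) * g ^ 2 := by
    nlinarith [sq_nonneg ((β + 2) * g - 4 * R ^ 2),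
      mul_nonneg (mul_nonneg (by linarith : (0:ℝ) ≤ 3 * β - 2) (by linarith : (0:ℝ) ≤ β + 2))
        (sq_nonneg g)]
  have : μ * R ^ 2 * g ^ 2 ≤ 2 * β * (2 + β) * g ^ 2 := by
    nlinarith [mul_le_mul_of_nonneg_right h (sq_nonneg R)]
  exact le_of_mul_le_mul_right this (by positivity)

lemma exists_orthonormal_sum_inner_sq_eq_norm_sq {E : Type*} [NormedAddCommGroup E]
    [InnerProductSpace ℝ E] [FiniteDimensional ℝ E] {k : ℕ} (hk : 1 ≤ k)
    (hkE : k ≤ Module.finrank ℝ E) (v : E) :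
    ∃ ξ : Fin k → E, Orthonormal ℝ ξ ∧ ∑ i, ⟪v, ξ i⟫ ^ 2 = ‖v‖ ^ 2 := by
  have : Nontrivial E := Module.finrank_pos_iff.1 (by omega : 0 < Module.finrank ℝ E)
  obtain ⟨u, hu, hvu⟩ : ∃ u : E, ‖u‖ = 1 ∧ ∀ y, ⟪v, y⟫ = ‖v‖ * ⟪u, y⟫ := by
    rcases eq_or_ne v 0 with rfl | hv
    · obtain ⟨u, hu⟩ := exists_norm_eq E zero_le_one
      exact ⟨u, hu, by simp⟩
    · refine ⟨‖v‖⁻¹ • v, norm_smul_inv_norm hv, fun y => ?_⟩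
      rw [real_inner_smul_left, mul_inv_cancel_left₀ (norm_ne_zero_iff.2 hv)]
  let i₀ : Fin k := ⟨0, hk⟩
  obtain ⟨b, hb⟩ := (orthonormal_subsingleton_iff.2 fun _ => hu :
      Orthonormal ℝ (({Fin.castLE hkE i₀} : Set _).domRestrict fun _ => u))
    |>.exists_orthonormalBasis_extension_of_card_eq (by simp)
  have hb₀ : b (Fin.castLE hkE i₀) = u := hb _ rfl
  refine ⟨b ∘ Fin.castLE hkE, b.orthonormal.comp _ (Fin.castLE_injective hkE), ?_⟩
  rw [Finset.sum_eq_single i₀]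
  · simp [hvu, hb₀, hu]
  · intro i _ hi
    have hne : Fin.castLE hkE i₀ ≠ Fin.castLE hkE i :=
      fun h => hi (Fin.castLE_injective hkE h).symm
    simp [hvu, ← hb₀, b.orthonormal.2 hne]
  · simp

section ballBump

variable {E : Type*} [NormedAddCommGroup E]

def ballBump (c : E) (R : ℝ) (y : E) : ℝ := R ^ 2 - ‖y - c‖ ^ 2

@[simp] lemma ballBump_self (c : E) (R : ℝ) : ballBump c R c = R ^ 2 := by simp [ballBump]

lemma ballBump_pos_iff {c : E} {R : ℝ} (hR : 0 ≤ R) {z : E} :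
    0 < ballBump c R z ↔ z ∈ ball c R := by
  rw [ballBump, sub_pos, mem_ball, dist_eq_norm, sq_lt_sq₀ (norm_nonneg _) hR]

lemma ballBump_nonneg {c : E} {R : ℝ} {z : E} (hz : z ∈ closedBall c R) :
    0 ≤ ballBump c R z := by
  rw [mem_closedBall, dist_eq_norm] at hz
  rw [ballBump, sub_nonneg]
  exact pow_le_pow_left₀ (norm_nonneg _) hz 2

lemma continuous_ballBump (c : E) (R : ℝ) : Continuous (ballBump c R) := by
  unfold ballBump
  fun_prop

lemma exists_touching_neg_mul_ballBump_sq [ProperSpace E] {w : E → ℝ} {c : E} {R : ℝ}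
    (hR : 0 < R) (hw : UpperSemicontinuousOn w (closedBall c R))
    (hneg : ∀ z ∈ closedBall c R, w z < 0) :
    ∃ x₀ ∈ ball c R, ∃ t > 0, w x₀ = -t * ballBump c R x₀ ^ 2 ∧
      ∀ z ∈ ball c R, w z ≤ -t * ballBump c R z ^ 2 := by
  have hc : c ∈ closedBall c R := mem_closedBall_self hR.le
  obtain ⟨xM, hxM, hM⟩ := hw.exists_isMaxOn ⟨c, hc⟩ (isCompact_closedBall c R)
  have hwc : w c < 0 := hneg c hc
  set F : E → ℝ := fun z => w z * (ballBump c R z ^ 2)⁻¹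
  have hFc : F c * (R ^ 2) ^ 2 = w c := by simp [F, (pow_pos hR 2).ne']
  have hFcneg : F c < 0 := mul_neg_of_neg_of_pos hwc (by rw [ballBump_self]; positivity)
  -- Off the compact set `K`, the bound `w ≤ w xM` already forces `F < F c`.
  set γ := w xM / F c
  have hγ : 0 < γ := div_pos_of_neg_of_neg (hneg xM hxM) hFcneg
  set K := closedBall c R ∩ {z | γ ≤ ballBump c R z ^ 2}
  have hKpos : ∀ z ∈ K, 0 < ballBump c R z ^ 2 := fun z hz => hγ.trans_le hz.2
  have hKball : K ⊆ ball c R := fun z hz => (ballBump_pos_iff hR.le).1 <|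
    (ballBump_nonneg hz.1).lt_of_ne fun h => by simpa [← h] using hKpos z hz
  have hcK : c ∈ K := by
    refine ⟨hc, ?_⟩
    show w xM / F c ≤ ballBump c R c ^ 2
    rw [ballBump_self, div_le_iff_of_neg hFcneg, mul_comm, hFc]
    exact hM hc
  have hFusc : UpperSemicontinuousOn F K :=
    UpperSemicontinuousOn.mul_continuousOn (hw.mono inter_subset_left)
      (((continuous_ballBump c R).pow 2).continuousOn.inv₀ fun z hz => (hKpos z hz).ne')
      fun z hz => inv_pos.2 (hKpos z hz)
  obtain ⟨x₀, hx₀K, hx₀⟩ := hFusc.exists_isMaxOn ⟨c, hcK⟩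
    ((isCompact_closedBall c R).inter_right (isClosed_le continuous_const
      ((continuous_ballBump c R).pow 2)))
  have hx₀ball := hKball hx₀K
  have hFx₀ : F x₀ < 0 := mul_neg_of_neg_of_pos (hneg x₀ (ball_subset_closedBall hx₀ball))
    (inv_pos.2 (hKpos x₀ hx₀K))
  refine ⟨x₀, hx₀ball, -F x₀, neg_pos.2 hFx₀, ?_, fun z hz => ?_⟩
  · simp only [F, neg_neg, inv_mul_cancel_right₀ (hKpos x₀ hx₀K).ne']
  have hgz : 0 < ballBump c R z ^ 2 := pow_pos ((ballBump_pos_iff hR.le).2 hz) 2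
  rw [neg_neg, ← div_le_iff₀ hgz]
  by_cases hzK : z ∈ K
  · exact hx₀ hzK
  have hzγ : ballBump c R z ^ 2 < γ := not_le.1 fun h => hzK ⟨ball_subset_closedBall hz, h⟩
  rw [div_le_iff₀ hgz]
  calc w z ≤ w xM := hM (ball_subset_closedBall hz)
    _ = F c * γ := (mul_div_cancel₀ _ hFcneg.ne).symm
    _ ≤ F c * ballBump c R z ^ 2 := mul_le_mul_of_nonpos_left hzγ.le hFcneg.le
    _ ≤ F x₀ * ballBump c R z ^ 2 := mul_le_mul_of_nonneg_right (hx₀ hcK) hgz.le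

variable [InnerProductSpace ℝ E]

lemma hasFDerivAt_ballBump (c : E) (R : ℝ) (x : E) :
    HasFDerivAt (ballBump c R) (-(2 • innerSL ℝ (x - c))) x :=
  (((hasFDerivAt_id x).sub_const c).norm_sq.const_sub (R ^ 2)).congr_fderiv (by simp)

lemma contDiff_neg_mul_ballBump_sq (t : ℝ) (c : E) (R : ℝ) {n : WithTop ℕ∞} :
    ContDiff ℝ n (fun y => -t * ballBump c R y ^ 2) :=
  contDiff_const.mul <| (contDiff_const.sub <|
    (contDiff_norm_sq ℝ).comp (contDiff_id.sub contDiff_const)).pow 2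

lemma hasFDerivAt_neg_mul_ballBump_sq (t : ℝ) (c : E) (R : ℝ) (x : E) :
    HasFDerivAt (fun y => -t * ballBump c R y ^ 2)
      ((4 * t * ballBump c R x) • innerSL ℝ (x - c)) x := by
  refine (((hasFDerivAt_ballBump c R x).pow 2).const_mul (-t)).congr_fderiv ?_
  ext v
  simp
  ring

lemma gradient_neg_mul_ballBump_sq [CompleteSpace E] (t : ℝ) (c : E) (R : ℝ) (x : E) :
    gradient (fun y => -t * ballBump c R y ^ 2) x = (4 * t * ballBump c R x) • (x - c) := by
  refine (hasGradientAt_iff_hasFDerivAt.2 ?_).gradient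
  refine (hasFDerivAt_neg_mul_ballBump_sq t c R x).congr_fderiv ?_
  ext v
  simp

lemma iteratedFDeriv_two_neg_mul_ballBump_sq (t : ℝ) (c : E) (R : ℝ) (x ξ : E) :
    iteratedFDeriv ℝ 2 (fun y => -t * ballBump c R y ^ 2) x ![ξ, ξ] =
      4 * t * ballBump c R x * ⟪ξ, ξ⟫ - 8 * t * ⟪x - c, ξ⟫ ^ 2 := by
  have hlin : HasFDerivAt (fun y => innerSL ℝ (y - c)) (innerSL ℝ) x :=
    ((innerSL ℝ).hasFDerivAt.comp x ((hasFDerivAt_id x).sub_const c)).congr_fderiv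
      (by ext; simp)
  have h := ((hasFDerivAt_ballBump c R x).const_mul (4 * t)).smul hlin
  rw [iteratedFDeriv_two_apply, funext fun y => (hasFDerivAt_neg_mul_ballBump_sq t c R y).fderiv]
  simp only [Matrix.cons_val_zero, Matrix.cons_val_one]
  rw [show (fun y => (4 * t * ballBump c R y) • innerSL ℝ (y - c)) =
    (fun y => 4 * t * ballBump c R y) • (fun y => innerSL ℝ (y - c)) from rfl, h.fderiv]
  -- `innerSL_apply_apply` does not match the coercion that `HasFDerivAt.smul` produces here.
  have hξ : innerSL ℝ ξ ξ = ⟪ξ, ξ⟫ := rfl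
  simp only [add_apply, smul_apply, ContinuousLinearMap.smulRight_apply, neg_apply,
    innerSL_apply_apply, smul_eq_mul, hξ, real_inner_comm ξ (x - c)]
  ring

end ballBump

lemma Pminus_le_sum_of_orthonormal {N k : ℕ} (φ : EuclideanSpace ℝ (Fin N) → ℝ)
    (x : EuclideanSpace ℝ (Fin N)) {ξ : Fin k → EuclideanSpace ℝ (Fin N)}
    (hξ : Orthonormal ℝ ξ) : Pminus k φ x ≤ ∑ i, iteratedFDeriv ℝ 2 φ x ![ξ i, ξ i] := by
  refine csInf_le ⟨-(k * ‖iteratedFDeriv ℝ 2 φ x‖), ?_⟩ ⟨ξ, hξ, rfl⟩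
  rintro _ ⟨ζ, hζ, rfl⟩
  have hterm (i : Fin k) : -‖iteratedFDeriv ℝ 2 φ x‖ ≤ iteratedFDeriv ℝ 2 φ x ![ζ i, ζ i] := by
    have h := (iteratedFDeriv ℝ 2 φ x).le_opNorm ![ζ i, ζ i]
    simp only [Fin.prod_univ_two, Matrix.cons_val_zero, Matrix.cons_val_one, hζ.1 i,
      mul_one, Real.norm_eq_abs] at h
    exact (abs_le.1 h).1
  calc -((k : ℝ) * ‖iteratedFDeriv ℝ 2 φ x‖) = ∑ _i : Fin k, -‖iteratedFDeriv ℝ 2 φ x‖ := by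
        simp
    _ ≤ _ := Finset.sum_le_sum fun i _ => hterm i

lemma IsViscSubsol.mul_ballBump_sq_le {N k : ℕ} (hk : 1 ≤ k) (hkN : k ≤ N)
    {Ω : Set (EuclideanSpace ℝ (Fin N))}
    {H : EuclideanSpace ℝ (Fin N) → EuclideanSpace ℝ (Fin N) → ℝ} {μ b : ℝ}
    {w : EuclideanSpace ℝ (Fin N) → ℝ} (hw : IsViscSubsol (Pminus k) Ω H μ (fun _ => 0) w)
    (hSC2 : SC2 Ω H) (hb : 0 ≤ b) (hSC1 : SC1 Ω H b) {c x₀ : EuclideanSpace ℝ (Fin N)}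
    {R t : ℝ} (hball : ball c R ⊆ Ω) (hx₀ : x₀ ∈ ball c R) (ht : 0 < t)
    (hwx₀ : w x₀ = -t * ballBump c R x₀ ^ 2)
    (hwle : ∀ z ∈ ball c R, w z ≤ -t * ballBump c R z ^ 2) :
    μ * ballBump c R x₀ ^ 2 ≤
      4 * (k + b * R) * ballBump c R x₀ - 8 * (R ^ 2 - ballBump c R x₀) := by
  set g := ballBump c R x₀
  set φ := fun y => -t * ballBump c R y ^ 2
  have hg : 0 < g := (ballBump_pos_iff (pos_of_mem_ball hx₀).le).2 hx₀
  have hv : ‖x₀ - c‖ < R := by rwa [mem_ball, dist_eq_norm] at hx₀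
  have hvg : ‖x₀ - c‖ ^ 2 = R ^ 2 - g := by simp [g, ballBump]
  have hmax : IsLocalMaxOn (fun y => w y - φ y) Ω x₀ := by
    filter_upwards [nhdsWithin_le_nhds (isOpen_ball.mem_nhds hx₀)] with y hy
    linarith [hwle y hy]
  have hvisc : 0 ≤ Pminus k φ x₀ + H x₀ (gradient φ x₀) + μ * w x₀ :=
    hw x₀ (hball hx₀) φ (contDiff_neg_mul_ballBump_sq t c R).contDiffAt hmax
  obtain ⟨ξ, hξ, hξv⟩ := exists_orthonormal_sum_inner_sq_eq_norm_sq hk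
    (by rwa [finrank_euclideanSpace_fin]) (x₀ - c)
  have hP : Pminus k φ x₀ ≤ 4 * t * g * k - 8 * t * ‖x₀ - c‖ ^ 2 := by
    refine (Pminus_le_sum_of_orthonormal φ x₀ hξ).trans_eq ?_
    simp only [φ, iteratedFDeriv_two_neg_mul_ballBump_sq, real_inner_self_eq_norm_sq, hξ.1,
      one_pow, mul_one, Finset.sum_sub_distrib, ← Finset.mul_sum, hξv]
    simp [g]
    ring
  have hH : H x₀ (gradient φ x₀) ≤ 4 * t * g * (b * R) := by
    rw [gradient_neg_mul_ballBump_sq, hSC2 x₀ (hball hx₀) _ (by positivity)]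
    refine mul_le_mul_of_nonneg_left ?_ (by positivity)
    exact (abs_le.1 (hSC1 x₀ (hball hx₀) _)).2.trans (mul_le_mul_of_nonneg_left hv.le hb)
  rw [hwx₀] at hvisc
  rw [hvg] at hP
  have : t * (μ * g ^ 2) ≤ t * (4 * (k + b * R) * g - 8 * (R ^ 2 - g)) := by
    linarith
  exact le_of_mul_le_mul_left this ht

theorem statement10_general {N : ℕ} (k : ℕ) (hk1 : 1 ≤ k) (hkN : k < N)
    (Ω : Set (EuclideanSpace ℝ (Fin N)))
    (H : EuclideanSpace ℝ (Fin N) → EuclideanSpace ℝ (Fin N) → ℝ)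
    (hSC2 : SC2 Ω H)
    (b : ℝ) (hb : 0 ≤ b) (hSC1 : SC1 Ω H b)
    (R₁ : ℝ) (hR₁ : 0 < R₁)
    (hball : ∃ c : EuclideanSpace ℝ (Fin N), ball c R₁ ⊆ Ω) :
    muBarMinus k Ω H ≤
      ((2 * ((k : ℝ) + b * R₁) * (2 + (k : ℝ) + b * R₁) / R₁ ^ 2 : ℝ) : EReal) := by
  obtain ⟨c, hc⟩ := hball
  refine sSup_le ?_
  rintro _ ⟨μ, rfl, w, hwusc, hwneg, hw⟩
  have hcl : closedBall c R₁ ⊆ closure Ω := closure_ball c hR₁.ne' ▸ closure_mono hc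
  obtain ⟨x₀, hx₀, t, ht, hwx₀, hwle⟩ := exists_touching_neg_mul_ballBump_sq hR₁
    (hwusc.mono hcl) fun z hz => hwneg z (hcl hz)
  have hμ := hw.mul_ballBump_sq_le hk1 hkN.le hSC2 hb hSC1 hc hx₀ ht hwx₀ hwle
  have hβ : 1 ≤ (k : ℝ) + b * R₁ := by
    have : (1 : ℝ) ≤ k := by exact_mod_cast hk1
    nlinarith [mul_nonneg hb hR₁.le]
  have hbound := mul_sq_le_of_mul_sq_le hβ ((ballBump_pos_iff hR₁.le).2 hx₀) hμ
  rw [EReal.coe_le_coe_iff, le_div_iff₀ (by positivity)]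
  linarith

/-- upper bound on `μ̄ₖ⁻(Ω)` when `Ω` contains a ball of radius `R₁`. -/
theorem statement10 {N : ℕ} (hN : 2 ≤ N) (k : ℕ) (hk1 : 1 ≤ k) (hkN : k < N)
    (Ω : Set (EuclideanSpace ℝ (Fin N))) (hΩopen : IsOpen Ω)
    (hΩbdd : Bornology.IsBounded Ω)
    (H : EuclideanSpace ℝ (Fin N) → EuclideanSpace ℝ (Fin N) → ℝ)
    (hHcont : ContinuousOn (Function.uncurry H)
      (Ω ×ˢ (univ : Set (EuclideanSpace ℝ (Fin N)))))
    (hSC2 : SC2 Ω H) (hSC3 : SC3 Ω H)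
    (b : ℝ) (hb : 0 ≤ b) (hSC1 : SC1 Ω H b)
    (R₁ : ℝ) (hR₁ : 0 < R₁)
    (hball : ∃ c : EuclideanSpace ℝ (Fin N), ball c R₁ ⊆ Ω) :
    muBarMinus k Ω H ≤
      ((2 * ((k : ℝ) + b * R₁) * (2 + (k : ℝ) + b * R₁) / R₁ ^ 2 : ℝ) : EReal) :=
  statement10_general k hk1 hkN Ω H hSC2 b hb hSC1 R₁ hR₁ hball
end

section
/- Let N ≥ 2, 1 ≤ k < N, let Ω ⊂ ℝ^N be a bounded open set, and let H : Ω × ℝ^N → ℝ be continuous and satisfy (SC2) and (SC3); set b = sup{|H(x,ξ)| : x ∈ Ω, |ξ| ≤ 1}. If Ω is contained in an open ball of radius R₂ > 0 and bR₂ ≤ k, then μ̄ₖ⁻(Ω) ≥ 2(k − bR₂)/R₂². -/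
open Metric Filter Topology Set

/-! For `s > R₂²` the paraboloid `w x = (‖x - c‖² - s) / 2` is negative on `cl Ω`. A `C²`
function `φ` touching it from above at `x₀ ∈ Ω` has `∇φ(x₀) = x₀ - c` and `D²φ(x₀) ≥ I`, so
`𝒫⁻ₖ(D²φ(x₀)) ≥ k`, `H(x₀, ∇φ(x₀)) ≥ -b‖x₀ - c‖ ≥ -bR₂` and `μ w(x₀) ≥ -μ s / 2`. Hence `w` is a
subsolution as soon as `μ s ≤ 2(k - bR₂)`, and letting `s ↓ R₂²` gives the bound. -/

theorem IsLocalMax.deriv_deriv_nonpos {f : ℝ → ℝ} {a : ℝ} (h : IsLocalMax f a)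
    (hc : ContinuousAt f a) : deriv (deriv f) a ≤ 0 := by
  -- otherwise the second-derivative test makes `a` a local minimum too, so `f` is locally constant
  by_contra! hpos
  have hconst : f =ᶠ[𝓝 a] fun _ => f a := by
    filter_upwards [h, isLocalMin_of_deriv_deriv_pos hpos h.deriv_eq_zero hc] with x hmax hmin
    exact le_antisymm hmax hmin
  have hderiv : deriv f =ᶠ[𝓝 a] fun _ => 0 := by
    filter_upwards [hconst.eventuallyEq_nhds] with x hx
    rw [hx.deriv_eq, deriv_const]
  rw [hderiv.deriv_eq, deriv_const] at hpos
  exact hpos.false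

section LocalMax

variable {E : Type*} [NormedAddCommGroup E] [NormedSpace ℝ E] {f u φ : E → ℝ} {x₀ : E}

theorem IsLocalMax.iteratedFDeriv_two_nonpos (h : IsLocalMax f x₀) (hf : ContDiffAt ℝ 2 f x₀)
    (v : E) : iteratedFDeriv ℝ 2 f x₀ ![v, v] ≤ 0 := by
  set L : ℝ → E := fun t => x₀ + t • v
  have hL : ∀ t, HasDerivAt L v t := fun t =>
    (((hasDerivAt_id t).smul_const v).const_add x₀).congr_deriv (one_smul ℝ v)
  have hL0 : L 0 = x₀ := by simp [L]
  have hLc : ContinuousAt L 0 := (hL 0).continuousAt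
  have hderiv : deriv (f ∘ L) =ᶠ[𝓝 0] fun t => fderiv ℝ f (L t) v := by
    have hdiff : ∀ᶠ t in 𝓝 (0 : ℝ), DifferentiableAt ℝ f (L t) :=
      hLc.tendsto.eventually (hL0 ▸ hf.eventually (by simp)) |>.mono
        fun t ht => ht.differentiableAt (by simp)
    filter_upwards [hdiff] with t ht
    exact (ht.hasFDerivAt.comp_hasDerivAt t (hL t)).deriv
  have hsecond : HasDerivAt (fun t => fderiv ℝ f (L t) v) (fderiv ℝ (fderiv ℝ f) x₀ v v) 0 := by
    have hd2 : HasFDerivAt (fderiv ℝ f) (fderiv ℝ (fderiv ℝ f) x₀) (L 0) := by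
      rw [hL0]
      exact ((hf.fderiv_right (m := 1) (by norm_num)).differentiableAt one_ne_zero).hasFDerivAt
    exact (ContinuousLinearMap.apply ℝ ℝ v).hasFDerivAt.comp_hasDerivAt 0
      (hd2.comp_hasDerivAt 0 (hL 0))
  have := (hL0 ▸ h).comp_continuous hLc |>.deriv_deriv_nonpos
    (hf.continuousAt.comp_of_eq hLc hL0)
  rw [hderiv.deriv_eq, hsecond.deriv] at this
  simpa [iteratedFDeriv_two_apply] using this

theorem IsLocalMax.fderiv_eq_of_sub (h : IsLocalMax (fun x => u x - φ x) x₀)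
    (hu : DifferentiableAt ℝ u x₀) (hφ : DifferentiableAt ℝ φ x₀) :
    fderiv ℝ φ x₀ = fderiv ℝ u x₀ := by
  have := h.fderiv_eq_zero
  rw [fderiv_fun_sub hu hφ, sub_eq_zero] at this
  exact this.symm

theorem IsLocalMax.iteratedFDeriv_two_le_of_sub (h : IsLocalMax (fun x => u x - φ x) x₀)
    (hu : ContDiffAt ℝ 2 u x₀) (hφ : ContDiffAt ℝ 2 φ x₀) (v : E) :
    iteratedFDeriv ℝ 2 u x₀ ![v, v] ≤ iteratedFDeriv ℝ 2 φ x₀ ![v, v] := by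
  have := IsLocalMax.iteratedFDeriv_two_nonpos (f := u - φ) h (hu.sub hφ) v
  rw [iteratedFDeriv_sub_apply (i := 2) hu hφ] at this
  simpa using this

end LocalMax

section Paraboloid

variable {E : Type*} [NormedAddCommGroup E] [InnerProductSpace ℝ E] (c : E) (s : ℝ)

noncomputable def paraboloid (x : E) : ℝ := (‖x - c‖ ^ 2 - s) / 2

theorem hasFDerivAt_paraboloid (x : E) :
    HasFDerivAt (paraboloid c s) (innerSL ℝ (x - c)) x := by
  have h := (((hasFDerivAt_id x).sub_const c).norm_sq.sub_const s).const_smul (2⁻¹ : ℝ)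
  refine (h.congr_fderiv ?_).congr_of_eventuallyEq (.of_forall fun y => ?_)
  · ext y
    simp
  · simp [paraboloid, div_eq_inv_mul]

theorem contDiff_paraboloid {n : WithTop ℕ∞} : ContDiff ℝ n (paraboloid c s) :=
  (((contDiff_id.sub contDiff_const).norm_sq ℝ).sub contDiff_const).div_const 2

theorem iteratedFDeriv_two_paraboloid (x v : E) :
    iteratedFDeriv ℝ 2 (paraboloid c s) x ![v, v] = ‖v‖ ^ 2 := by
  have hfd : fderiv ℝ (paraboloid c s) = fun x => innerSL ℝ (x - c) :=
    funext fun x => (hasFDerivAt_paraboloid c s x).fderiv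
  have hfd2 : HasFDerivAt (fun x => innerSL ℝ (x - c)) (innerSL ℝ) x :=
    (innerSL ℝ).hasFDerivAt.comp x ((hasFDerivAt_id x).sub_const c)
  rw [iteratedFDeriv_two_apply, hfd, hfd2.fderiv]
  exact real_inner_self_eq_norm_sq v

theorem gradient_paraboloid [CompleteSpace E] (x : E) : gradient (paraboloid c s) x = x - c :=
  (hasGradientAt_iff_hasFDerivAt.2 (hasFDerivAt_paraboloid c s x)).gradient

end Paraboloid

theorem paraboloid_neg_of_mem_closure {E : Type*} [NormedAddCommGroup E] [InnerProductSpace ℝ E]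
    {Ω : Set E} {c x : E} {R s : ℝ} (hc : Ω ⊆ ball c R) (hs : R ^ 2 < s) (hx : x ∈ closure Ω) :
    paraboloid c s x < 0 := by
  have hxc : ‖x - c‖ ≤ R := by
    simpa [dist_eq_norm] using closure_ball_subset_closedBall (closure_mono hc hx)
  have := pow_le_pow_left₀ (norm_nonneg _) hxc 2
  unfold paraboloid
  linarith

section Euclidean

variable {N k : ℕ}

theorem mul_le_Pminus_of_le_iteratedFDeriv (hkN : k ≤ N) {φ : EuclideanSpace ℝ (Fin N) → ℝ}
    {x : EuclideanSpace ℝ (Fin N)} {a : ℝ}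
    (h : ∀ v, ‖v‖ = 1 → a ≤ iteratedFDeriv ℝ 2 φ x ![v, v]) : k * a ≤ Pminus k φ x := by
  let e := EuclideanSpace.basisFun (Fin N) ℝ
  refine le_csInf ⟨_, fun i => e (Fin.castLE hkN i),
    e.orthonormal.comp _ (Fin.castLE_injective hkN), rfl⟩ ?_
  rintro _ ⟨ξ, hξ, rfl⟩
  calc (k : ℝ) * a = ∑ _i : Fin k, a := by simp
    _ ≤ _ := Finset.sum_le_sum fun i _ => h (ξ i) (hξ.1 i)

variable {Ω : Set (EuclideanSpace ℝ (Fin N))}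
  {H : EuclideanSpace ℝ (Fin N) → EuclideanSpace ℝ (Fin N) → ℝ} {c : EuclideanSpace ℝ (Fin N)}
  {b R μ s : ℝ}

theorem isViscSubsol_paraboloid (hkN : k ≤ N) (hΩ : IsOpen Ω) (hb : 0 ≤ b) (hSC1 : SC1 Ω H b)
    (hc : Ω ⊆ ball c R) (hμ : 0 ≤ μ) (hμs : μ * s ≤ 2 * (k - b * R)) :
    IsViscSubsol (Pminus k) Ω H μ (fun _ => 0) (paraboloid c s) := by
  intro x₀ hx₀ φ hφ hmaxOn
  have hmax : IsLocalMax (fun x => paraboloid c s x - φ x) x₀ :=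
    hmaxOn.isLocalMax (hΩ.mem_nhds hx₀)
  have hw : ContDiffAt ℝ 2 (paraboloid c s) x₀ := (contDiff_paraboloid c s).contDiffAt
  have hgrad : gradient φ x₀ = x₀ - c := by
    rw [← gradient_paraboloid c s x₀, gradient, gradient, hmax.fderiv_eq_of_sub
      (hw.differentiableAt two_ne_zero) (hφ.differentiableAt two_ne_zero)]
  have hPminus : (k : ℝ) ≤ Pminus k φ x₀ := by
    simpa using mul_le_Pminus_of_le_iteratedFDeriv hkN (a := 1) fun v hv => by
      simpa [iteratedFDeriv_two_paraboloid, hv] using hmax.iteratedFDeriv_two_le_of_sub hw hφ v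
  have hH : -(b * R) ≤ H x₀ (x₀ - c) := by
    have hx : ‖x₀ - c‖ < R := by simpa [dist_eq_norm] using hc hx₀
    nlinarith [neg_abs_le (H x₀ (x₀ - c)), hSC1 x₀ hx₀ (x₀ - c),
      mul_le_mul_of_nonneg_left hx.le hb]
  have hw0 : -(s / 2) ≤ paraboloid c s x₀ := by
    unfold paraboloid
    nlinarith [sq_nonneg ‖x₀ - c‖]
  show (0 : ℝ) ≤ _
  rw [hgrad]
  nlinarith [mul_le_mul_of_nonneg_left hw0 hμ]

theorem coe_le_muBarMinus (hkN : k ≤ N) (hΩ : IsOpen Ω) (hb : 0 ≤ b) (hSC1 : SC1 Ω H b)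
    (hc : Ω ⊆ ball c R) (hμ : 0 ≤ μ) (hs : R ^ 2 < s) (hμs : μ * s ≤ 2 * (k - b * R)) :
    (μ : EReal) ≤ muBarMinus k Ω H :=
  le_sSup ⟨μ, rfl, paraboloid c s,
    (contDiff_paraboloid c s (n := 0)).continuous.upperSemicontinuous.upperSemicontinuousOn _,
    fun _ hx => paraboloid_neg_of_mem_closure hc hs hx,
    isViscSubsol_paraboloid hkN hΩ hb hSC1 hc hμ hμs⟩

end Euclidean

theorem statement11_general {N : ℕ} (k : ℕ) (hkN : k < N)
    (Ω : Set (EuclideanSpace ℝ (Fin N))) (hΩopen : IsOpen Ω)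
    (H : EuclideanSpace ℝ (Fin N) → EuclideanSpace ℝ (Fin N) → ℝ)
    (b : ℝ) (hb : 0 ≤ b) (hSC1 : SC1 Ω H b)
    (R₂ : ℝ) (hR₂ : 0 < R₂)
    (hsub : ∃ c : EuclideanSpace ℝ (Fin N), Ω ⊆ ball c R₂)
    (hbR : b * R₂ ≤ (k : ℝ)) :
    ((2 * ((k : ℝ) - b * R₂) / R₂ ^ 2 : ℝ) : EReal) ≤ muBarMinus k Ω H := by
  obtain ⟨c, hc⟩ := hsub
  refine EReal.ge_of_forall_gt_iff_ge.1 fun μ hμ => ?_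
  rcases le_or_gt μ 0 with hμ0 | hμ0
  · refine (EReal.coe_le_coe_iff.2 hμ0).trans ?_
    exact coe_le_muBarMinus hkN.le hΩopen hb hSC1 hc le_rfl (lt_add_one (R₂ ^ 2)) (by linarith)
  · have hμR : μ * R₂ ^ 2 < 2 * (k - b * R₂) :=
      (lt_div_iff₀ (by positivity)).1 (EReal.coe_lt_coe_iff.1 hμ)
    refine coe_le_muBarMinus hkN.le hΩopen hb hSC1 hc hμ0.le (s := 2 * (k - b * R₂) / μ) ?_ ?_
    · rwa [lt_div_iff₀' hμ0]
    · rw [mul_div_cancel₀ _ hμ0.ne']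

/-- lower bound on `μ̄ₖ⁻(Ω)` when `Ω` is contained in a ball of radius
`R₂` and `bR₂ ≤ k`. -/
theorem statement11 {N : ℕ} (hN : 2 ≤ N) (k : ℕ) (hk1 : 1 ≤ k) (hkN : k < N)
    (Ω : Set (EuclideanSpace ℝ (Fin N))) (hΩopen : IsOpen Ω)
    (hΩbdd : Bornology.IsBounded Ω)
    (H : EuclideanSpace ℝ (Fin N) → EuclideanSpace ℝ (Fin N) → ℝ)
    (hHcont : ContinuousOn (Function.uncurry H)
      (Ω ×ˢ (univ : Set (EuclideanSpace ℝ (Fin N)))))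
    (hSC2 : SC2 Ω H) (hSC3 : SC3 Ω H)
    (b : ℝ) (hb : 0 ≤ b) (hSC1 : SC1 Ω H b)
    (R₂ : ℝ) (hR₂ : 0 < R₂)
    (hsub : ∃ c : EuclideanSpace ℝ (Fin N), Ω ⊆ ball c R₂)
    (hbR : b * R₂ ≤ (k : ℝ)) :
    ((2 * ((k : ℝ) - b * R₂) / R₂ ^ 2 : ℝ) : EReal) ≤ muBarMinus k Ω H :=
  statement11_general k hkN Ω hΩopen H b hb hSC1 R₂ hR₂ hsub hbR
end

section
/- Let N ≥ 2, 1 ≤ k < N, R > 0 and b ≥ 0 with bR < k. Let Ω ⊆ B_R(0) be a bounded open subset of ℝ^N and let H : Ω × ℝ^N → ℝ be continuous and satisfy (SC1) with constant b. Then for every μ ∈ ℝ there exists a function w, continuous and strictly positive on cl(Ω), that is a viscosity supersolution of 𝒫⁻ₖ(D²w) + H(x,∇w) + μw = 0 in Ω; consequently μₖ⁺(Ω) = μ̄ₖ⁺(Ω) = +∞. In particular, if H ≡ 0 this holds for every bounded open Ω. -/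
open Metric Filter Topology Set

/-!
The supersolution is a Gaussian `w x = exp (-α ‖x‖²)`. If a `C²` function `φ` touches `w` from
below at `x ∈ Ω`, then along each of `k < N` orthonormal directions tangent to the sphere through
`x` the second derivative of `φ` is at most that of `w`, namely `-2α w(x)`; and
`∇φ(x) = ∇w(x) = -2α w(x) x` has norm at most `2α w(x) R`. Hence
`𝒫⁻ₖ(D²φ(x)) + H(x, ∇φ(x)) + μ w(x) ≤ (μ - 2α (k - bR)) w(x)`, which is `≤ 0` for `α` large
because `bR < k`.
-/

theorem nonneg_of_isLocalMin_of_hasDerivAt {g g' : ℝ → ℝ} {a m : ℝ}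
    (hg : ∀ᶠ t in 𝓝 a, HasDerivAt g (g' t) t) (hg' : HasDerivAt g' m a)
    (hmin : IsLocalMin g a) : 0 ≤ m := by
  by_contra! hm
  -- Adding the small bump `-q ≥ 0` keeps `a` a critical point with negative second derivative,
  -- so `a` is a local maximum of `g - q`; with the local minimum of `g` this forces `-q ≤ 0`
  -- near `a`, which fails off `a`.
  set q : ℝ → ℝ := fun t => m / 4 * (t - a) ^ 2
  have hq : ∀ t, HasDerivAt q (m / 2 * (t - a)) t := fun t =>
    ((((hasDerivAt_id t).sub_const a).pow 2).const_mul (m / 4)).congr_deriv (by simp; ring)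
  have hq' : HasDerivAt (fun t => m / 2 * (t - a)) (m / 2) a := by
    simpa using ((hasDerivAt_id a).sub_const a).const_mul (m / 2)
  have hderiv : deriv (g - q) =ᶠ[𝓝 a] g' - fun t => m / 2 * (t - a) :=
    hg.mono fun t ht => (ht.sub (hq t)).deriv
  have hmax : IsLocalMax (g - q) a := by
    refine isLocalMax_of_deriv_deriv_neg ?_ ?_ ?_
    · rw [hderiv.deriv_eq, (hg'.sub hq').deriv]
      linarith
    · rw [hderiv.eq_of_nhds]
      simp [hmin.hasDerivAt_eq_zero hg.self_of_nhds]
    · exact (hg.self_of_nhds.sub (hq a)).continuousAt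
  obtain ⟨t, ⟨hmin_t, hmax_t⟩, hta⟩ :=
    ((hmin.and hmax).filter_mono nhdsWithin_le_nhds |>.and self_mem_nhdsWithin).exists
      (f := 𝓝[≠] a)
  have hpos : 0 < (t - a) ^ 2 := by positivity [sub_ne_zero.mpr hta]
  simp only [Pi.sub_apply, q, sub_self] at hmax_t
  nlinarith

section NormedSpace

variable {E : Type*} [NormedAddCommGroup E] [NormedSpace ℝ E] {u φ : E → ℝ} {x : E}

theorem ContDiffAt.eventually_hasDerivAt_comp_line (hφ : ContDiffAt ℝ 2 φ x) (v : E) :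
    ∀ᶠ t in 𝓝 (0 : ℝ), HasDerivAt (fun s => φ (x + s • v)) (fderiv ℝ φ (x + t • v) v) t := by
  have hline : Tendsto (fun t : ℝ => x + t • v) (𝓝 0) (𝓝 x) :=
    (continuous_const.add (continuous_id.smul continuous_const)).tendsto' 0 x (by simp)
  filter_upwards [hline.eventually (hφ.eventually (by simp))] with t ht
  exact (ht.differentiableAt (by simp)).hasFDerivAt.comp_hasDerivAt t
    (((hasDerivAt_id t).smul_const v).const_add x |>.congr_deriv (by simp))

theorem ContDiffAt.hasDerivAt_fderiv_comp_line (hφ : ContDiffAt ℝ 2 φ x) (v : E) :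
    HasDerivAt (fun t : ℝ => fderiv ℝ φ (x + t • v) v) (iteratedFDeriv ℝ 2 φ x ![v, v]) 0 := by
  have hD : HasFDerivAt (fderiv ℝ φ) (fderiv ℝ (fderiv ℝ φ) x) (x + (0 : ℝ) • v) := by
    simpa using ((hφ.fderiv_right (m := 1) (by norm_num)).differentiableAt
      (by norm_num)).hasFDerivAt
  rw [iteratedFDeriv_two_apply]
  exact (ContinuousLinearMap.apply ℝ ℝ v).hasFDerivAt.comp_hasDerivAt 0
    (hD.comp_hasDerivAt 0 ((((hasDerivAt_id (0 : ℝ)).smul_const v).const_add x).congr_deriv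
      (by simp)))

theorem iteratedFDeriv_two_le_of_isLocalMin_sub {v : E} {g' : ℝ → ℝ} {m : ℝ}
    (hφ : ContDiffAt ℝ 2 φ x) (hmin : IsLocalMin (fun y => u y - φ y) x)
    (hu : ∀ᶠ t in 𝓝 (0 : ℝ), HasDerivAt (fun s => u (x + s • v)) (g' t) t)
    (hg' : HasDerivAt g' m 0) : iteratedFDeriv ℝ 2 φ x ![v, v] ≤ m := by
  have hline_min : IsLocalMin (fun t : ℝ => u (x + t • v) - φ (x + t • v)) 0 := by
    have hmin' : IsLocalMin (fun y => u y - φ y) (x + (0 : ℝ) • v) := by simpa using hmin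
    exact hmin'.comp_continuous (g := fun t : ℝ => x + t • v) (by fun_prop)
  have := nonneg_of_isLocalMin_of_hasDerivAt
    (hu.and (hφ.eventually_hasDerivAt_comp_line v) |>.mono fun t ht => ht.1.sub ht.2)
    (hg'.sub (hφ.hasDerivAt_fderiv_comp_line v)) hline_min
  linarith

end NormedSpace

section InnerProductSpace

variable {F : Type*} [NormedAddCommGroup F] [InnerProductSpace ℝ F] {φ : F → ℝ} {x : F}

theorem IsLocalMin.gradient_eq_of_sub [CompleteSpace F] {u : F → ℝ} {u' : F}
    (hu : HasGradientAt u u' x) (hφ : DifferentiableAt ℝ φ x)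
    (hmin : IsLocalMin (fun y => u y - φ y) x) : gradient φ x = u' := by
  have h := hmin.hasFDerivAt_eq_zero
    ((hasGradientAt_iff_hasFDerivAt.mp hu).sub hφ.hasFDerivAt)
  rw [← toDual_gradient, ← map_sub, LinearIsometryEquiv.map_eq_zero_iff, sub_eq_zero] at h
  exact h.symm

theorem hasGradientAt_exp_neg_mul_norm_sq [CompleteSpace F] (α : ℝ) (x : F) :
    HasGradientAt (fun y => Real.exp (-α * ‖y‖ ^ 2))
      ((-2 * α * Real.exp (-α * ‖x‖ ^ 2)) • x) x := by
  rw [hasGradientAt_iff_hasFDerivAt]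
  refine (((hasStrictFDerivAt_norm_sq x).hasFDerivAt.const_mul (-α)).exp).congr_fderiv ?_
  ext y
  simp
  ring

theorem norm_add_smul_sq_of_inner_eq_zero {ξ : F} (hξ : ‖ξ‖ = 1) (hperp : inner ℝ x ξ = 0)
    (t : ℝ) : ‖x + t • ξ‖ ^ 2 = ‖x‖ ^ 2 + t ^ 2 := by
  rw [norm_add_sq_real, real_inner_smul_right, hperp, norm_smul, hξ]
  simp

theorem iteratedFDeriv_two_le_of_isLocalMin_exp_sub (α : ℝ) {ξ : F} (hξ : ‖ξ‖ = 1)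
    (hperp : inner ℝ x ξ = 0) (hφ : ContDiffAt ℝ 2 φ x)
    (hmin : IsLocalMin (fun y => Real.exp (-α * ‖y‖ ^ 2) - φ y) x) :
    iteratedFDeriv ℝ 2 φ x ![ξ, ξ] ≤ -2 * α * Real.exp (-α * ‖x‖ ^ 2) := by
  refine iteratedFDeriv_two_le_of_isLocalMin_sub hφ hmin
    (g' := fun t => -2 * α * t * Real.exp (-α * (‖x‖ ^ 2 + t ^ 2)))
    (Eventually.of_forall fun t => ?_) ?_
  · simp only [norm_add_smul_sq_of_inner_eq_zero hξ hperp]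
    exact ((((hasDerivAt_pow 2 t).const_add (‖x‖ ^ 2)).const_mul (-α)).exp).congr_deriv
      (by ring)
  · exact (((hasDerivAt_id (0 : ℝ)).const_mul (-2 * α)).fun_mul
      ((((hasDerivAt_pow 2 (0 : ℝ)).const_add (‖x‖ ^ 2)).const_mul (-α)).exp)).congr_deriv
      (by simp)

theorem exists_orthonormal_orthogonal [FiniteDimensional ℝ F] {k : ℕ}
    (hk : k < Module.finrank ℝ F) (x : F) :
    ∃ ξ : Fin k → F, Orthonormal ℝ ξ ∧ ∀ i, inner ℝ x (ξ i) = 0 := by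
  have hdim : k ≤ Module.finrank ℝ (ℝ ∙ x)ᗮ := by
    have h := Submodule.finrank_add_finrank_orthogonal (ℝ ∙ x)
    have h1 : Module.finrank ℝ (ℝ ∙ x) ≤ 1 :=
      (finrank_span_le_card ({x} : Set F)).trans (by simp)
    omega
  set e := stdOrthonormalBasis ℝ (ℝ ∙ x)ᗮ
  refine ⟨fun i => (e (Fin.castLE hdim i) : F), ?_, fun i => ?_⟩
  · exact (e.orthonormal.comp _ (Fin.castLE_injective hdim)).comp_linearIsometry
      (ℝ ∙ x)ᗮ.subtypeₗᵢ
  · exact Submodule.inner_right_of_mem_orthogonal (Submodule.mem_span_singleton_self x)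
      (e (Fin.castLE hdim i)).2

end InnerProductSpace

theorem Pminus_le_sum {N k : ℕ} {φ : EuclideanSpace ℝ (Fin N) → ℝ} {x : EuclideanSpace ℝ (Fin N)}
    {ξ : Fin k → EuclideanSpace ℝ (Fin N)} (hξ : Orthonormal ℝ ξ) :
    Pminus k φ x ≤ ∑ i, iteratedFDeriv ℝ 2 φ x ![ξ i, ξ i] := by
  refine csInf_le ⟨-(k * ‖iteratedFDeriv ℝ 2 φ x‖), ?_⟩ ⟨ξ, hξ, rfl⟩
  rintro s ⟨ζ, hζ, rfl⟩
  have hterm : ∀ i, -‖iteratedFDeriv ℝ 2 φ x‖ ≤ iteratedFDeriv ℝ 2 φ x ![ζ i, ζ i] := by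
    intro i
    have h := (iteratedFDeriv ℝ 2 φ x).le_opNorm ![ζ i, ζ i]
    simp only [Fin.prod_univ_two, Matrix.cons_val_zero, Matrix.cons_val_one, hζ.1 i, mul_one,
      Real.norm_eq_abs] at h
    exact neg_le_of_abs_le h
  simpa using Finset.sum_le_sum (s := Finset.univ) fun i _ => hterm i

theorem isViscSupersol_exp_neg_mul_norm_sq {N k : ℕ} (hkN : k < N) {R b α μ : ℝ} (hb : 0 ≤ b)
    (hα : 0 ≤ α) (hμ : μ ≤ 2 * α * (k - b * R)) {Ω : Set (EuclideanSpace ℝ (Fin N))}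
    (hΩopen : IsOpen Ω) (hΩsub : Ω ⊆ ball 0 R)
    {H : EuclideanSpace ℝ (Fin N) → EuclideanSpace ℝ (Fin N) → ℝ} (hSC1 : SC1 Ω H b) :
    IsViscSupersol (Pminus k) Ω H μ (fun _ => 0) (fun x => Real.exp (-α * ‖x‖ ^ 2)) := by
  intro x hx φ hφ hminOn
  set wx := Real.exp (-α * ‖x‖ ^ 2)
  have hmin := hminOn.isLocalMin (hΩopen.mem_nhds hx)
  obtain ⟨ξ, hξ, hperp⟩ := exists_orthonormal_orthogonal (by simpa using hkN) x
  have hPminus : Pminus k φ x ≤ k * (-2 * α * wx) := calc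
    Pminus k φ x ≤ ∑ i, iteratedFDeriv ℝ 2 φ x ![ξ i, ξ i] := Pminus_le_sum hξ
    _ ≤ ∑ _i : Fin k, -2 * α * wx := Finset.sum_le_sum fun i _ =>
      iteratedFDeriv_two_le_of_isLocalMin_exp_sub α (hξ.1 i) (hperp i) hφ hmin
    _ = k * (-2 * α * wx) := by simp
  have hgrad : gradient φ x = (-2 * α * wx) • x :=
    hmin.gradient_eq_of_sub (hasGradientAt_exp_neg_mul_norm_sq α x)
      (hφ.differentiableAt (by norm_num))
  have hwx : 0 < wx := Real.exp_pos _
  have hH : H x (gradient φ x) ≤ b * (2 * α * wx * R) := calc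
    H x (gradient φ x) ≤ b * ‖gradient φ x‖ := (le_abs_self _).trans (hSC1 x hx _)
    _ = b * (2 * α * wx * ‖x‖) := by
      rw [hgrad, norm_smul, Real.norm_eq_abs, abs_of_nonpos (by nlinarith)]
      ring
    _ ≤ b * (2 * α * wx * R) := by gcongr; exact (mem_ball_zero_iff.mp (hΩsub hx)).le
  calc Pminus k φ x + H x (gradient φ x) + μ * wx
      ≤ k * (-2 * α * wx) + b * (2 * α * wx * R) + μ * wx := by gcongr
    _ = (μ - 2 * α * (k - b * R)) * wx := by ring
    _ ≤ 0 := mul_nonpos_of_nonpos_of_nonneg (by linarith) hwx.le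

theorem sSup_setOf_coe_eq_top {P : ℝ → Prop} (h : ∀ μ, P μ) :
    sSup {m : EReal | ∃ μ : ℝ, m = μ ∧ P μ} = ⊤ :=
  sSup_eq_top.mpr fun _ hx =>
    let ⟨r, hxr, _⟩ := EReal.exists_between_coe_real hx
    ⟨r, ⟨r, rfl, h r⟩, hxr⟩

theorem exists_pos_isViscSupersol {N k : ℕ} (hkN : k < N) {R b : ℝ} (hb : 0 ≤ b)
    (hbR : b * R < k) {Ω : Set (EuclideanSpace ℝ (Fin N))} (hΩopen : IsOpen Ω)
    (hΩsub : Ω ⊆ ball 0 R) {H : EuclideanSpace ℝ (Fin N) → EuclideanSpace ℝ (Fin N) → ℝ}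
    (hSC1 : SC1 Ω H b) (μ : ℝ) :
    ∃ w : EuclideanSpace ℝ (Fin N) → ℝ, Continuous w ∧ (∀ x, 0 < w x) ∧
      IsViscSupersol (Pminus k) Ω H μ (fun _ => 0) w := by
  have hgap : 0 < 2 * ((k : ℝ) - b * R) := by linarith
  set α := max (μ / (2 * ((k : ℝ) - b * R))) 0
  have hμ : μ ≤ 2 * α * (k - b * R) := by
    have := (div_le_iff₀ hgap).mp (le_max_left (μ / (2 * ((k : ℝ) - b * R))) 0)
    linarith
  exact ⟨_, by fun_prop, fun _ => Real.exp_pos _,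
    isViscSupersol_exp_neg_mul_norm_sq hkN hb (le_max_right _ _) hμ hΩopen hΩsub hSC1⟩

theorem statement12_general {N : ℕ} (k : ℕ) (hkN : k < N)
    (R b : ℝ) (hb : 0 ≤ b) (hbR : b * R < (k : ℝ))
    (Ω : Set (EuclideanSpace ℝ (Fin N))) (hΩopen : IsOpen Ω)
    (hΩsub : Ω ⊆ ball (0 : EuclideanSpace ℝ (Fin N)) R)
    (H : EuclideanSpace ℝ (Fin N) → EuclideanSpace ℝ (Fin N) → ℝ)
    (hSC1 : SC1 Ω H b) :
    (∀ μ : ℝ, ∃ w : EuclideanSpace ℝ (Fin N) → ℝ,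
      ContinuousOn w (closure Ω) ∧ (∀ x ∈ closure Ω, 0 < w x) ∧
      IsViscSupersol (Pminus k) Ω H μ (fun _ => 0) w) ∧
    muPlus k Ω H = ⊤ ∧ muBarPlus k Ω H = ⊤ := by
  have hsol := exists_pos_isViscSupersol hkN hb hbR hΩopen hΩsub hSC1
  have hlsc (s : Set (EuclideanSpace ℝ (Fin N))) (μ : ℝ) : ∃ w : EuclideanSpace ℝ (Fin N) → ℝ,
      LowerSemicontinuousOn w s ∧ (∀ x ∈ s, 0 < w x) ∧
      IsViscSupersol (Pminus k) Ω H μ (fun _ => 0) w :=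
    let ⟨w, hwc, hwpos, hw⟩ := hsol μ
    ⟨w, hwc.lowerSemicontinuous.lowerSemicontinuousOn s, fun x _ => hwpos x, hw⟩
  refine ⟨fun μ => ?_, sSup_setOf_coe_eq_top (hlsc Ω), sSup_setOf_coe_eq_top (hlsc (closure Ω))⟩
  obtain ⟨w, hwc, hwpos, hw⟩ := hsol μ
  exact ⟨w, hwc.continuousOn, fun x _ => hwpos x, hw⟩

/-- if `Ω ⊆ B_R(0)` and `bR < k`, then for every `μ` there is a
positive continuous supersolution of `𝒫⁻ₖ(D²w) + H(x,∇w) + μw = 0` on `cl(Ω)`;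
consequently `μₖ⁺(Ω) = μ̄ₖ⁺(Ω) = +∞`. -/
theorem statement12 {N : ℕ} (hN : 2 ≤ N) (k : ℕ) (hk1 : 1 ≤ k) (hkN : k < N)
    (R b : ℝ) (hR : 0 < R) (hb : 0 ≤ b) (hbR : b * R < (k : ℝ))
    (Ω : Set (EuclideanSpace ℝ (Fin N))) (hΩopen : IsOpen Ω)
    (hΩsub : Ω ⊆ ball (0 : EuclideanSpace ℝ (Fin N)) R)
    (H : EuclideanSpace ℝ (Fin N) → EuclideanSpace ℝ (Fin N) → ℝ)
    (hHcont : ContinuousOn (Function.uncurry H)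
      (Ω ×ˢ (univ : Set (EuclideanSpace ℝ (Fin N)))))
    (hSC1 : SC1 Ω H b) :
    (∀ μ : ℝ, ∃ w : EuclideanSpace ℝ (Fin N) → ℝ,
      ContinuousOn w (closure Ω) ∧ (∀ x ∈ closure Ω, 0 < w x) ∧
      IsViscSupersol (Pminus k) Ω H μ (fun _ => 0) w) ∧
    muPlus k Ω H = ⊤ ∧ muBarPlus k Ω H = ⊤ :=
  statement12_general k hkN R b hb hbR Ω hΩopen hΩsub H hSC1
end
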